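/- Assume that for every p ∈ 𝒫 and every h ∈ Λ(Q) the function Ψ_p(h,·) is real-valued and bounded. Then a walk inflow h* ∈ Λ(Q) is a dynamic equilibrium with fixed flow volumes and departure time choice if and only if h* solves the variational inequality VI(Ψ,Q): ⟨Ψ(h*), h − h*⟩ ≥ 0 for all h ∈ Λ(Q). -/

import Mathlib

open MeasureTheory Filter Set

noncomputable section

/-- The restriction of the Lebesgue measure to the planning horizon `[t₀, t_f]`. -/
def horizonMeasure (t0 tf : ℝ) : Measure ℝ := volume.restrict (Icc t0 tf)

/-- `f` is (a representative of) a nonnegative square-integrable function on `[t₀, t_f]`,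
i.e. an element of `L²₊([t₀,t_f])`. -/
def L2nonneg (t0 tf : ℝ) (f : ℝ → ℝ) : Prop :=
  MemLp f 2 (horizonMeasure t0 tf) ∧ 0 ≤ᵐ[horizonMeasure t0 tf] f

/-- A walk inflow: a vector of nonnegative L² functions on the horizon, one per walk. -/
def WalkInflow {P : Type*} (t0 tf : ℝ) (h : P → ℝ → ℝ) : Prop := ∀ p, L2nonneg t0 tf (h p)

variable {I P E : Type*}

/-- The (finite) set of walks belonging to commodity `i`. -/
def commWalks [Fintype P] [DecidableEq I] (comm : P → I) (i : I) : Finset P :=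
  Finset.univ.filter fun p => comm p = i

/-- The set `Λ(Q)` of feasible walk inflows for fixed flow volumes `Q` with
inflow bounds `B`. -/
def LambdaQ [Fintype P] [DecidableEq I] (t0 tf : ℝ) (comm : P → I) (B : P → ℝ)
    (Q : I → ℝ) : Set (P → ℝ → ℝ) :=
  {h | WalkInflow t0 tf h ∧
    (∀ i, ∑ p ∈ commWalks comm i, ∫ t, h p t ∂(horizonMeasure t0 tf) = Q i) ∧
    ∀ p, ∀ᵐ t ∂(horizonMeasure t0 tf), h p t ≤ B p}

/-- The set `Λ(r)` of feasible walk inflows for fixed network inflow rates `r`. -/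
def LambdaR [Fintype P] [DecidableEq I] (t0 tf : ℝ) (comm : P → I)
    (r : I → ℝ → ℝ) : Set (P → ℝ → ℝ) :=
  {h | WalkInflow t0 tf h ∧
    ∀ i, ∀ᵐ t ∂(horizonMeasure t0 tf), ∑ p ∈ commWalks comm i, h p t = r i t}

/-- The canonical scalar product `⟨f,g⟩ = Σ_p ∫ f_p(t) g_p(t) dt` on `L²([t₀,t_f])^𝒫`. -/
def inner2 [Fintype P] (t0 tf : ℝ) (f g : P → ℝ → ℝ) : ℝ :=
  ∑ p : P, ∫ t, f p t * g p t ∂(horizonMeasure t0 tf)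

/-- Weak convergence of a sequence of walk inflows. -/
def WeakConvTo [Fintype P] (t0 tf : ℝ) (hn : ℕ → P → ℝ → ℝ) (h : P → ℝ → ℝ) : Prop :=
  ∀ g : P → ℝ → ℝ, (∀ p, MemLp (g p) 2 (horizonMeasure t0 tf)) →
    Tendsto (fun n => inner2 t0 tf (hn n) g) atTop (nhds (inner2 t0 tf h g))

/-- Convergence in `L²`-norm on the horizon. -/
def L2Tendsto (t0 tf : ℝ) (fn : ℕ → ℝ → ℝ) (f : ℝ → ℝ) : Prop :=
  Tendsto (fun n => eLpNorm (fun t => fn n t - f t) 2 (horizonMeasure t0 tf)) atTop (nhds 0)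

/-- Dynamic equilibrium with fixed inflow rates. -/
def IsDEFixedRates [Fintype P] [DecidableEq I] (t0 tf : ℝ) (comm : P → I) (r : I → ℝ → ℝ)
    (Psi : (P → ℝ → ℝ) → P → ℝ → ℝ) (h : P → ℝ → ℝ) : Prop :=
  h ∈ LambdaR t0 tf comm r ∧
    ∀ p q, comm p = comm q →
      ∀ᵐ t ∂(horizonMeasure t0 tf), 0 < h p t → Psi h p t ≤ Psi h q t

/-- Dynamic equilibrium with fixed flow volumes and departure time choice. -/
def IsDEFixedVolume [Fintype P] [DecidableEq I] (t0 tf : ℝ) (comm : P → I) (B : P → ℝ)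
    (Q : I → ℝ) (Psi : (P → ℝ → ℝ) → P → ℝ → ℝ) (h : P → ℝ → ℝ) : Prop :=
  h ∈ LambdaQ t0 tf comm B Q ∧
    ∀ i, ∃ ν : ℝ, ∀ p, comm p = i →
      ∀ᵐ t ∂(horizonMeasure t0 tf),
        (0 < h p t → Psi h p t ≤ ν) ∧ (h p t < B p → ν ≤ Psi h p t)

/-- Dynamic equilibrium with elastic demands and departure time choice. -/
def IsDEElastic [Fintype P] [DecidableEq I] (t0 tf : ℝ) (comm : P → I) (B : P → ℝ)
    (Q : I → ℝ) (Psi : (P → ℝ → ℝ) → P → ℝ → ℝ) (Θ : I → ℝ → ℝ)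
    (h : P → ℝ → ℝ) (Qstar : I → ℝ) : Prop :=
  (∀ i, 0 ≤ Qstar i ∧ Qstar i ≤ Q i) ∧
  h ∈ LambdaQ t0 tf comm B Qstar ∧
  ∀ i, ∃ ν : ℝ,
    (∀ p, comm p = i → ∀ᵐ t ∂(horizonMeasure t0 tf),
      (0 < h p t → Psi h p t ≤ ν) ∧ (h p t < B p → ν ≤ Psi h p t)) ∧
    (Qstar i < Q i → ν = Θ i (Qstar i)) ∧
    (Qstar i = Q i → ν ≤ Θ i (Q i))

/-- The effective walk-delay operator of the extended (fixed-volume) instance obtained from an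
elastic-demand instance: on original walks it is `Ψ`, on the new walk `p̃ᵢ` it is
`Θᵢ` of the total volume of commodity `i` on its original walks. -/
def PsiExt [Fintype P] [DecidableEq I] (t0 tf : ℝ) (comm : P → I)
    (Psi : (P → ℝ → ℝ) → P → ℝ → ℝ) (Θ : I → ℝ → ℝ) :
    (P ⊕ I → ℝ → ℝ) → P ⊕ I → ℝ → ℝ := fun h' w t =>
  match w with
  | Sum.inl p => Psi (fun q => h' (Sum.inl q)) p t
  | Sum.inr i =>
      Θ i (∑ p ∈ commWalks comm i, ∫ s, h' (Sum.inl p) s ∂(horizonMeasure t0 tf))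

/-! ## Side-constrained equilibria -/

/-- The basic requirements on an admissible γ-deviation `(q,γ,Δ)` from walk `p` at inflow `h`:
`q` belongs to the same commodity as `p`, `γ ∈ L²₊([t₀,t_f])`, `γ ≤ h_p` a.e.,
`h_q(t) + γ(t−Δ) ≤ B_q` a.e., and the support of `γ(·−Δ)` is contained in `[t₀,t_f]`
up to a null set. -/
def ValidTriple (t0 tf : ℝ) (comm : P → I) (B : P → ℝ) (h : P → ℝ → ℝ)
    (p q : P) (γ : ℝ → ℝ) (Δ : ℝ) : Prop :=
  comm q = comm p ∧ L2nonneg t0 tf γ ∧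
  (∀ᵐ t ∂(horizonMeasure t0 tf), γ t ≤ h p t) ∧
  (∀ᵐ t ∂(horizonMeasure t0 tf), h q t + γ (t - Δ) ≤ B q) ∧
  (∀ᵐ t ∂(volume : Measure ℝ), γ (t - Δ) ≠ 0 → t ∈ Icc t0 tf)

/-- The set `U_p(h,t)` of admissible deviations `(q,Δ)` for walk `p` at time `t` under the
inflow `h`, given the correspondence `A` of admissible γ-deviations. -/
def UDev (t0 tf : ℝ) (A : (P → ℝ → ℝ) → P → Set (P × (ℝ → ℝ) × ℝ))
    (h : P → ℝ → ℝ) (p : P) (t : ℝ) : Set (P × ℝ) :=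
  {qd | ∀ δ > (0:ℝ), ∀ ε > (0:ℝ), ∃ γ : ℝ → ℝ,
    L2nonneg t0 tf γ ∧
    0 < ∫ s, γ s ∂(horizonMeasure t0 tf) ∧
    (∀ᵐ s ∂(horizonMeasure t0 tf), γ s ≤ ε) ∧
    (∀ᵐ s ∂(horizonMeasure t0 tf), γ s ≠ 0 → s ∈ Icc (t - δ) (t + δ)) ∧
    (qd.1, γ, qd.2) ∈ A h p}

/-- Side-constrained dynamic equilibrium (SCDE) w.r.t. the effective walk-delay operator
`Psi` (valued in a preorder, e.g. `ℝ` or `ℝ ∪ {∞}`), the constraint set `S` and the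
correspondences `A` of admissible γ-deviations. -/
def IsSCDE {α : Type*} [Preorder α] (t0 tf : ℝ)
    (Psi : (P → ℝ → ℝ) → P → ℝ → α) (S : Set (P → ℝ → ℝ))
    (A : (P → ℝ → ℝ) → P → Set (P × (ℝ → ℝ) × ℝ)) (h : P → ℝ → ℝ) : Prop :=
  h ∈ S ∧ ∀ p, ∀ t ∈ Icc t0 tf, ∀ q Δ, (q, Δ) ∈ UDev t0 tf A h p t →
    Psi h p t ≤ Psi h q (t + Δ)

/-- The walk inflow `H_{p→q}(h,γ,Δ)` obtained from `h` by the γ-deviation `(q,γ,Δ)`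
from walk `p`. -/
def Hshift [DecidableEq P] (h : P → ℝ → ℝ) (p q : P) (γ : ℝ → ℝ) (Δ : ℝ) :
    P → ℝ → ℝ := fun w t =>
  h w t + (if w = q then γ (t - Δ) else 0) - (if w = p then γ t else 0)

/-- The set `M(h)` of all walk inflows reachable from `h` by a single admissible
γ-deviation. -/
def MSet [DecidableEq P] (A : (P → ℝ → ℝ) → P → Set (P × (ℝ → ℝ) × ℝ))
    (h : P → ℝ → ℝ) : Set (P → ℝ → ℝ) :=
  {h' | ∃ p q γ Δ, (q, γ, Δ) ∈ A h p ∧ h' = Hshift h p q γ Δ}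

/-- The tangent cone `T(A_p,h)` at `h` w.r.t. the correspondences `A`. -/
def TangentCone [Fintype P] [DecidableEq P] (t0 tf : ℝ)
    (A : (P → ℝ → ℝ) → P → Set (P × (ℝ → ℝ) × ℝ)) (h : P → ℝ → ℝ) :
    Set (P → ℝ → ℝ) :=
  {v | (∀ p, MemLp (v p) 2 (horizonMeasure t0 tf)) ∧
    ∃ (hn : ℕ → P → ℝ → ℝ) (tn : ℕ → ℝ),
      (∀ n, hn n ∈ MSet A h) ∧ (∀ n, 0 < tn n) ∧
      Tendsto tn atTop (nhds 0) ∧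
      ∀ p, Tendsto
        (fun n => eLpNorm (fun t => (hn n p t - h p t) / tn n - v p t) 2
          (horizonMeasure t0 tf)) atTop (nhds 0)}

/-- The correspondences `A` are closed under rate-reduction at `h`. -/
def ClosedRateReduction (A : (P → ℝ → ℝ) → P → Set (P × (ℝ → ℝ) × ℝ))
    (h : P → ℝ → ℝ) : Prop :=
  ∀ p q γ Δ, (q, γ, Δ) ∈ A h p → ∀ lam ∈ Icc (0:ℝ) 1,
    (q, fun t => lam * γ t, Δ) ∈ A h p

/-- The correspondences `A` are closed under time-restriction at `h`. -/
def ClosedTimeRestriction (A : (P → ℝ → ℝ) → P → Set (P × (ℝ → ℝ) × ℝ))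
    (h : P → ℝ → ℝ) : Prop :=
  ∀ p q γ Δ, (q, γ, Δ) ∈ A h p → ∀ J : Set ℝ, MeasurableSet J →
    (q, J.indicator γ, Δ) ∈ A h p

/-- `S` is closed with respect to elementary directions (w.r.t. the correspondences `A`). -/
def ClosedElemDir (t0 tf : ℝ) (comm : P → I) (S : Set (P → ℝ → ℝ))
    (A : (P → ℝ → ℝ) → P → Set (P × (ℝ → ℝ) × ℝ)) : Prop :=
  ∀ h ∈ S, ∀ h' ∈ S, ∀ p q, comm p = comm q →
    ∀ J : Set ℝ, J ⊆ Icc t0 tf → MeasurableSet J → 0 < volume J →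
      (∀ t ∈ J, h' p t < h p t ∧ h q t < h' q t) →
      ∃ t ∈ J, (q, (0:ℝ)) ∈ UDev t0 tf A h p t

/-! ## Edge-load constraints and network loading -/

/-- The edge-load feasibility set `S = {h ∈ Λ(Q) : f_e(h,θ) ≤ c_e(θ) for all e and θ ≥ 0}`. -/
def SEdge [Fintype P] [DecidableEq I] (t0 tf : ℝ) (comm : P → I) (B : P → ℝ) (Q : I → ℝ)
    (f : (P → ℝ → ℝ) → E → ℝ → ℝ) (c : E → ℝ → ℝ) : Set (P → ℝ → ℝ) :=
  {h | h ∈ LambdaQ t0 tf comm B Q ∧ ∀ e θ, 0 ≤ θ → f h e θ ≤ c e θ}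

/-- Strong LP-deviations: admissible γ-deviations whose alternative walk is strictly
unsaturated at every entrance time. -/
def AsLP (t0 tf : ℝ) (comm : P → I) (B : P → ℝ)
    (len : P → ℕ) (edgeOf : P → ℕ → E)
    (τ : (P → ℝ → ℝ) → P → ℕ → ℝ → ℝ)
    (f : (P → ℝ → ℝ) → E → ℝ → ℝ) (c : E → ℝ → ℝ)
    (h : P → ℝ → ℝ) (p : P) : Set (P × (ℝ → ℝ) × ℝ) :=
  {d | ValidTriple t0 tf comm B h p d.1 d.2.1 d.2.2 ∧
    ∃ γ₀ : ℝ → ℝ, γ₀ =ᵐ[horizonMeasure t0 tf] d.2.1 ∧ (∀ s, s ∉ Icc t0 tf → γ₀ s = 0) ∧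
      ∀ t, γ₀ (t - d.2.2) ≠ 0 → ∀ j, 1 ≤ j → j ≤ len d.1 →
        f h (edgeOf d.1 j) (τ h d.1 j t) < c (edgeOf d.1 j) (τ h d.1 j t)}

/-- Weak LP-deviations: admissible γ-deviations whose alternative walk is strictly
unsaturated during the whole traversal of each of its edges. -/
def AwLP (t0 tf : ℝ) (comm : P → I) (B : P → ℝ)
    (len : P → ℕ) (edgeOf : P → ℕ → E)
    (τ : (P → ℝ → ℝ) → P → ℕ → ℝ → ℝ)
    (f : (P → ℝ → ℝ) → E → ℝ → ℝ) (c : E → ℝ → ℝ)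
    (h : P → ℝ → ℝ) (p : P) : Set (P × (ℝ → ℝ) × ℝ) :=
  {d | ValidTriple t0 tf comm B h p d.1 d.2.1 d.2.2 ∧
    ∃ γ₀ : ℝ → ℝ, γ₀ =ᵐ[horizonMeasure t0 tf] d.2.1 ∧ (∀ s, s ∉ Icc t0 tf → γ₀ s = 0) ∧
      ∀ t, γ₀ (t - d.2.2) ≠ 0 → ∀ j, 1 ≤ j → j ≤ len d.1 →
        ∀ θ ∈ Icc (τ h d.1 j t) (τ h d.1 (j+1) t),
          f h (edgeOf d.1 j) θ < c (edgeOf d.1 j) θ}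

/-- Strong MNS-deviations: strong LP-deviations together with deviations without time
shift whose alternative walk is strictly unsaturated (at entrance times) outside a common
prefix with the original walk. -/
def AsMNS (t0 tf : ℝ) (comm : P → I) (B : P → ℝ)
    (len : P → ℕ) (edgeOf : P → ℕ → E)
    (τ : (P → ℝ → ℝ) → P → ℕ → ℝ → ℝ)
    (f : (P → ℝ → ℝ) → E → ℝ → ℝ) (c : E → ℝ → ℝ)
    (h : P → ℝ → ℝ) (p : P) : Set (P × (ℝ → ℝ) × ℝ) :=
  AsLP t0 tf comm B len edgeOf τ f c h p ∪
  {d | d.2.2 = 0 ∧ ValidTriple t0 tf comm B h p d.1 d.2.1 d.2.2 ∧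
    ∃ k, k ≤ len p ∧ k ≤ len d.1 ∧ (∀ j, 1 ≤ j → j ≤ k → edgeOf p j = edgeOf d.1 j) ∧
      ∃ γ₀ : ℝ → ℝ, γ₀ =ᵐ[horizonMeasure t0 tf] d.2.1 ∧ (∀ s, s ∉ Icc t0 tf → γ₀ s = 0) ∧
        ∀ t, γ₀ t ≠ 0 → ∀ j, k < j → j ≤ len d.1 →
          f h (edgeOf d.1 j) (τ h d.1 j t) < c (edgeOf d.1 j) (τ h d.1 j t)}

/-- Weak MNS-deviations: weak LP-deviations together with deviations without time shift
whose alternative walk is strictly unsaturated (during edge traversal) outside a common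
prefix with the original walk. -/
def AwMNS (t0 tf : ℝ) (comm : P → I) (B : P → ℝ)
    (len : P → ℕ) (edgeOf : P → ℕ → E)
    (τ : (P → ℝ → ℝ) → P → ℕ → ℝ → ℝ)
    (f : (P → ℝ → ℝ) → E → ℝ → ℝ) (c : E → ℝ → ℝ)
    (h : P → ℝ → ℝ) (p : P) : Set (P × (ℝ → ℝ) × ℝ) :=
  AwLP t0 tf comm B len edgeOf τ f c h p ∪
  {d | d.2.2 = 0 ∧ ValidTriple t0 tf comm B h p d.1 d.2.1 d.2.2 ∧
    ∃ k, k ≤ len p ∧ k ≤ len d.1 ∧ (∀ j, 1 ≤ j → j ≤ k → edgeOf p j = edgeOf d.1 j) ∧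
      ∃ γ₀ : ℝ → ℝ, γ₀ =ᵐ[horizonMeasure t0 tf] d.2.1 ∧ (∀ s, s ∉ Icc t0 tf → γ₀ s = 0) ∧
        ∀ t, γ₀ t ≠ 0 → ∀ j, k < j → j ≤ len d.1 →
          ∀ θ ∈ Icc (τ h d.1 j t) (τ h d.1 (j+1) t),
            f h (edgeOf d.1 j) θ < c (edgeOf d.1 j) θ}

/-! Both directions work commodity by commodity. If `h*` is an equilibrium with threshold `νᵢ`,
then `(Ψ_p(h*) - νᵢ)(h_p - h*_p) ≥ 0` pointwise for every feasible `h`; integrating and summing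
over the walks of commodity `i`, whose total volumes agree, gives the variational inequality.
Conversely, if a used walk `p` costs more than `c` on a set of positive measure while an
unsaturated walk `q` of the same commodity costs less than `c` on another, then moving a small
constant rate of equal volume from `p` to `q` stays in `Λ(Q)` and makes `⟨Ψ(h*), h - h*⟩`
negative. So for every `c` either all used walks cost at most `c` a.e. or all unsaturated walks
cost at least `c` a.e., and `νᵢ` is the infimum of the levels of the first kind. -/

instance (t0 tf : ℝ) : IsFiniteMeasure (horizonMeasure t0 tf) :=
  isFiniteMeasure_restrict.2 measure_Icc_lt_top.ne

lemma ae_mem_Icc_horizonMeasure (t0 tf : ℝ) : ∀ᵐ t ∂(horizonMeasure t0 tf), t ∈ Icc t0 tf :=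
  ae_restrict_mem measurableSet_Icc

lemma mul_sub_le_mul_sub_of_threshold {x y ψ ν b : ℝ} (hx0 : 0 ≤ x) (hxb : x ≤ b)
    (hpos : 0 < y → ψ ≤ ν) (hlt : y < b → ν ≤ ψ) : ν * (x - y) ≤ ψ * (x - y) := by
  rcases lt_trichotomy ψ ν with hψ | rfl | hψ
  · have : b ≤ y := not_lt.1 fun h => (hlt h).not_gt hψ
    nlinarith
  · rfl
  · have : y ≤ 0 := not_lt.1 fun h => (hpos h).not_gt hψ
    nlinarith

lemma exists_threshold_of_monotone_of_antitone {A B : ℝ → Prop} (hA : Monotone A)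
    (hB : Antitone B) (hAB : ∀ c, A c ∨ B c) {a b : ℝ} (ha : A a) (hb : B b) :
    ∃ ν, (∀ c, ν < c → A c) ∧ ∀ c, c < ν → B c := by
  by_cases hbdd : BddBelow {c | A c}
  · refine ⟨sInf {c | A c}, fun c hc => ?_, fun c hc => (hAB c).resolve_left fun hAc => ?_⟩
    · obtain ⟨x, hx, hxc⟩ := exists_lt_of_csInf_lt ⟨a, ha⟩ hc
      exact hA hxc.le hx
    · exact hc.not_ge (csInf_le hbdd hAc)
  · refine ⟨b, fun c _ => ?_, fun c hc => hB hc.le hb⟩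
    obtain ⟨x, hx, hxc⟩ := not_bddBelow_iff.1 hbdd c
    exact hA hxc.le hx

section

variable {α : Type*} [MeasurableSpace α] {μ : Measure α} {S : α → Prop} {f : α → ℝ} {ν : ℝ}

lemma ae_imp_le_of_forall_lt (h : ∀ c, ν < c → ∀ᵐ t ∂μ, S t → f t ≤ c) :
    ∀ᵐ t ∂μ, S t → f t ≤ ν := by
  have hrat : ∀ᵐ t ∂μ, ∀ r : ℚ, ν < r → S t → f t ≤ r := by
    refine ae_all_iff.2 fun r => ?_
    by_cases hr : ν < r
    · exact (h r hr).mono fun t ht _ => ht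
    · exact Eventually.of_forall fun t hr' => absurd hr' hr
  filter_upwards [hrat] with t ht hSt
  by_contra! hlt
  obtain ⟨r, hνr, hrf⟩ := exists_rat_btwn hlt
  exact (ht r hνr hSt).not_gt hrf

lemma ae_imp_ge_of_forall_gt (h : ∀ c, c < ν → ∀ᵐ t ∂μ, S t → c ≤ f t) :
    ∀ᵐ t ∂μ, S t → ν ≤ f t := by
  have := ae_imp_le_of_forall_lt (μ := μ) (S := S) (f := fun t => -f t) (ν := -ν)
    fun c hc => (h (-c) (neg_lt.1 hc)).mono fun t ht hSt => neg_le.1 (ht hSt)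
  exact this.mono fun t ht hSt => neg_le_neg_iff.1 (ht hSt)

lemma exists_measurableSet_subset_of_measure_ne_zero {f g : α → ℝ} (hf : AEMeasurable f μ)
    (hg : AEMeasurable g μ) {a b : ℝ} (h : μ {t | a < f t ∧ b < g t} ≠ 0) :
    ∃ ε > 0, ∃ U ⊆ {t | a + ε ≤ f t ∧ b + ε ≤ g t}, MeasurableSet U ∧ μ U ≠ 0 := by
  obtain ⟨n, hn⟩ : ∃ n : ℕ, μ {t | a + 1 / (n + 1) ≤ f t ∧ b + 1 / (n + 1) ≤ g t} ≠ 0 := by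
    by_contra! hall
    refine h (measure_mono_null ?_ (measure_iUnion_null_iff.2 hall))
    rintro t ⟨haf, hbg⟩
    obtain ⟨n, hn⟩ := exists_nat_one_div_lt (sub_pos.2 (lt_min (sub_pos.2 haf) (sub_pos.2 hbg)))
    exact mem_iUnion.2 ⟨n, by linarith [min_le_left (f t - a) (g t - b)],
      by linarith [min_le_right (f t - a) (g t - b)]⟩
  have hnull : NullMeasurableSet {t | a + 1 / (n + 1) ≤ f t ∧ b + 1 / (n + 1) ≤ g t} μ :=
    (nullMeasurableSet_le aemeasurable_const hf).inter (nullMeasurableSet_le aemeasurable_const hg)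
  obtain ⟨U, hUsub, hUmeas, hUae⟩ := hnull.exists_measurable_subset_ae_eq
  exact ⟨1 / (n + 1), by positivity, U, hUsub, hUmeas, by rwa [measure_congr hUae]⟩

lemma integral_mul_indicator_const (g : α → ℝ) {U : Set α} (hU : MeasurableSet U) (r : ℝ) :
    ∫ t, g t * U.indicator (fun _ => r) t ∂μ = r * ∫ t in U, g t ∂μ := by
  simp_rw [← Set.indicator_mul_right, integral_indicator hU, integral_mul_const, mul_comm]

end

section Transfer

variable [DecidableEq P] {t0 tf : ℝ}

lemma integral_pi_single (q w : P) (v : ℝ → ℝ) :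
    ∫ t, (Pi.single q v : P → ℝ → ℝ) w t ∂(horizonMeasure t0 tf) =
      (Pi.single q (∫ t, v t ∂(horizonMeasure t0 tf)) : P → ℝ) w := by
  rcases eq_or_ne w q with rfl | hw <;> simp [*]

variable [Fintype P]

lemma inner2_single_sub_single (g : P → ℝ → ℝ) {p q : P} {u v : ℝ → ℝ}
    (hu : Integrable (fun t => g p t * u t) (horizonMeasure t0 tf))
    (hv : Integrable (fun t => g q t * v t) (horizonMeasure t0 tf)) :
    inner2 t0 tf g (Pi.single q v - Pi.single p u) =
      ∫ t, g q t * v t ∂(horizonMeasure t0 tf) - ∫ t, g p t * u t ∂(horizonMeasure t0 tf) := by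
  have hw : ∀ w,
      ∫ t, g w t * (Pi.single q v - Pi.single p u : P → ℝ → ℝ) w t ∂(horizonMeasure t0 tf) =
      (Pi.single q (∫ t, g q t * v t ∂(horizonMeasure t0 tf)) : P → ℝ) w -
        (Pi.single p (∫ t, g p t * u t ∂(horizonMeasure t0 tf)) : P → ℝ) w := by
    intro w
    rcases eq_or_ne w q with rfl | hwq <;> rcases eq_or_ne w p with rfl | hwp <;>
      simp [*, mul_sub, integral_sub, integral_neg]
  rw [inner2, Finset.sum_congr rfl fun w _ => hw w, Finset.sum_sub_distrib,
    Finset.sum_pi_single', Finset.sum_pi_single']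
  simp

variable [DecidableEq I] {comm : P → I} {B : P → ℝ} {Q : I → ℝ}

lemma add_single_sub_single_mem_lambdaQ {h : P → ℝ → ℝ} (hh : h ∈ LambdaQ t0 tf comm B Q)
    {p q : P} (hpq : comm p = comm q) {u v : ℝ → ℝ} (hu : L2nonneg t0 tf u)
    (hv : L2nonneg t0 tf v)
    (huv : ∫ t, u t ∂(horizonMeasure t0 tf) = ∫ t, v t ∂(horizonMeasure t0 tf))
    (hup : ∀ᵐ t ∂(horizonMeasure t0 tf), u t ≤ h p t)
    (hvq : ∀ᵐ t ∂(horizonMeasure t0 tf), h q t + v t ≤ B q) :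
    h + Pi.single q v - Pi.single p u ∈ LambdaQ t0 tf comm B Q := by
  have hsingle : ∀ {f : ℝ → ℝ} (r w : P), L2nonneg t0 tf f →
      MemLp ((Pi.single r f : P → ℝ → ℝ) w) 2 (horizonMeasure t0 tf) := by
    intro f r w hf
    rcases eq_or_ne w r with rfl | hw
    · simpa using hf.1
    · simp [hw]
  have hint : ∀ w, Integrable (h w) (horizonMeasure t0 tf) := fun w =>
    (hh.1 w).1.integrable one_le_two
  refine ⟨fun w => ⟨((hh.1 w).1.add (hsingle q w hv)).sub (hsingle p w hu), ?_⟩,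
    fun i => ?_, fun w => ?_⟩
  · filter_upwards [(hh.1 w).2, hu.2, hv.2, hup] with t h0 hu0 hv0 hut
    simp only [Pi.zero_apply, Pi.add_apply, Pi.sub_apply, Pi.single_apply,
      ite_apply] at h0 hu0 hv0 ⊢
    split_ifs <;> subst_vars <;> linarith
  · have hw : ∀ w,
        ∫ t, (h + Pi.single q v - Pi.single p u : P → ℝ → ℝ) w t ∂(horizonMeasure t0 tf) =
        ∫ t, h w t ∂(horizonMeasure t0 tf) +
          (Pi.single q (∫ t, v t ∂(horizonMeasure t0 tf)) : P → ℝ) w -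
          (Pi.single p (∫ t, u t ∂(horizonMeasure t0 tf)) : P → ℝ) w := by
      intro w
      have hq := (hsingle q w hv).integrable one_le_two
      rw [Pi.sub_apply, Pi.add_apply,
        integral_sub' ((hint w).add hq) ((hsingle p w hu).integrable one_le_two),
        integral_add' (hint w) hq, integral_pi_single, integral_pi_single]
    rw [Finset.sum_congr rfl fun w _ => hw w, Finset.sum_sub_distrib, Finset.sum_add_distrib,
      hh.2.1 i, Finset.sum_pi_single', Finset.sum_pi_single']
    simp [commWalks, hpq, huv]
  · filter_upwards [hh.2.2 w, hu.2, hvq] with t hB hu0 hvt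
    simp only [Pi.zero_apply, Pi.add_apply, Pi.sub_apply, Pi.single_apply,
      ite_apply] at hu0 ⊢
    split_ifs <;> subst_vars <;> linarith

end Transfer

section Equilibrium

variable [Fintype P] [DecidableEq I] {t0 tf : ℝ} {comm : P → I} {B : P → ℝ} {Q : I → ℝ}

lemma IsDEFixedVolume.inner2_sub_nonneg {Psi : (P → ℝ → ℝ) → P → ℝ → ℝ} {hstar : P → ℝ → ℝ}
    (hde : IsDEFixedVolume t0 tf comm B Q Psi hstar)
    (hΨ : ∀ p, MemLp (Psi hstar p) ⊤ (horizonMeasure t0 tf)) {h : P → ℝ → ℝ}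
    (hh : h ∈ LambdaQ t0 tf comm B Q) :
    0 ≤ inner2 t0 tf (Psi hstar) (fun p t => h p t - hstar p t) := by
  obtain ⟨hmem, hthr⟩ := hde
  choose ν hν using hthr
  have hint : ∀ p, Integrable (fun t => h p t - hstar p t) (horizonMeasure t0 tf) := fun p =>
    ((hh.1 p).1.sub (hmem.1 p).1).integrable one_le_two
  have hwalk : ∀ p, ν (comm p) * ∫ t, (h p t - hstar p t) ∂(horizonMeasure t0 tf) ≤
      ∫ t, Psi hstar p t * (h p t - hstar p t) ∂(horizonMeasure t0 tf) := by
    intro p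
    rw [← integral_const_mul]
    refine integral_mono_ae ((hint p).const_mul _) ((hint p).mul_of_top_right (hΨ p)) ?_
    filter_upwards [hν (comm p) p rfl, (hh.1 p).2, hh.2.2 p] with t hνt h0 hB
    exact mul_sub_le_mul_sub_of_threshold h0 hB hνt.1 hνt.2
  have hcomm : ∀ i, ∑ p ∈ commWalks comm i,
      ν (comm p) * ∫ t, (h p t - hstar p t) ∂(horizonMeasure t0 tf) = 0 := by
    intro i
    rw [Finset.sum_congr rfl fun p hp => by rw [(Finset.mem_filter.1 hp).2], ← Finset.mul_sum]
    simp_rw [integral_sub ((hh.1 _).1.integrable one_le_two)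
      ((hmem.1 _).1.integrable one_le_two)]
    rw [Finset.sum_sub_distrib, hh.2.1 i, hmem.2.1 i, sub_self, mul_zero]
  calc 0 = ∑ p, ν (comm p) * ∫ t, (h p t - hstar p t) ∂(horizonMeasure t0 tf) := by
        rw [← Finset.sum_fiberwise_of_maps_to fun p _ => Finset.mem_image_of_mem comm
          (Finset.mem_univ p)]
        exact (Finset.sum_eq_zero fun i _ => hcomm i).symm
    _ ≤ inner2 t0 tf (Psi hstar) (fun p t => h p t - hstar p t) :=
        Finset.sum_le_sum fun p _ => hwalk p

lemma add_single_indicator_sub_single_indicator_mem_lambdaQ [DecidableEq P] {hstar : P → ℝ → ℝ}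
    (hmem : hstar ∈ LambdaQ t0 tf comm B Q) {p q : P} (hpq : comm p = comm q) {U V : Set ℝ}
    (hU : MeasurableSet U) (hV : MeasurableSet V) {α β : ℝ} (hα : 0 ≤ α) (hβ : 0 ≤ β)
    (hαβ : α * (horizonMeasure t0 tf).real U = β * (horizonMeasure t0 tf).real V)
    (hUp : ∀ t ∈ U, α ≤ hstar p t) (hVq : ∀ t ∈ V, hstar q t + β ≤ B q) :
    hstar + Pi.single q (V.indicator fun _ => β) - Pi.single p (U.indicator fun _ => α) ∈
      LambdaQ t0 tf comm B Q := by
  refine add_single_sub_single_mem_lambdaQ hmem hpq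
    ⟨memLp_indicator_const 2 hU _ (Or.inr (measure_ne_top _ _)),
      Eventually.of_forall fun t => Set.indicator_nonneg (fun _ _ => hα) t⟩
    ⟨memLp_indicator_const 2 hV _ (Or.inr (measure_ne_top _ _)),
      Eventually.of_forall fun t => Set.indicator_nonneg (fun _ _ => hβ) t⟩
    ?_ ?_ ?_
  · simpa only [integral_indicator_const _ hU, integral_indicator_const _ hV, smul_eq_mul,
      mul_comm] using hαβ
  · filter_upwards [(hmem.1 p).2] with t h0
    by_cases ht : t ∈ U
    · simpa only [Set.indicator_of_mem ht] using hUp t ht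
    · simpa [Set.indicator_of_notMem ht] using h0
  · filter_upwards [hmem.2.2 q] with t hB
    by_cases ht : t ∈ V
    · simpa only [Set.indicator_of_mem ht] using hVq t ht
    · simpa [Set.indicator_of_notMem ht] using hB

lemma ae_imp_le_or_ae_imp_ge_of_inner2_nonneg {g : P → ℝ → ℝ}
    (hg : ∀ p, MemLp (g p) ⊤ (horizonMeasure t0 tf)) {hstar : P → ℝ → ℝ}
    (hmem : hstar ∈ LambdaQ t0 tf comm B Q)
    (hVI : ∀ h ∈ LambdaQ t0 tf comm B Q, 0 ≤ inner2 t0 tf g (fun p t => h p t - hstar p t))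
    {p q : P} (hpq : comm p = comm q) (c : ℝ) :
    (∀ᵐ t ∂(horizonMeasure t0 tf), 0 < hstar p t → g p t ≤ c) ∨
      ∀ᵐ t ∂(horizonMeasure t0 tf), hstar q t < B q → c ≤ g q t := by
  classical
  set μ := horizonMeasure t0 tf
  rw [or_iff_not_imp_left]
  intro hp
  by_contra hq
  rw [ae_iff] at hp hq
  simp only [Classical.not_imp, not_le] at hp hq
  obtain ⟨ε₁, hε₁, U, hUsub, hU, hU0⟩ := exists_measurableSet_subset_of_measure_ne_zero
    (hmem.1 p).1.aestronglyMeasurable.aemeasurable (hg p).aestronglyMeasurable.aemeasurable hp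
  obtain ⟨ε₂, hε₂, V, hVsub, hV, hV0⟩ := exists_measurableSet_subset_of_measure_ne_zero
    (f := fun t => -hstar q t) (g := fun t => -g q t) (a := -B q) (b := -c)
    (hmem.1 q).1.aestronglyMeasurable.aemeasurable.neg
    (hg q).aestronglyMeasurable.aemeasurable.neg
    (by simpa only [neg_lt_neg_iff] using hq)
  set a := μ.real U
  set b := μ.real V
  have ha : 0 < a := ENNReal.toReal_pos hU0 (measure_ne_top _ _)
  have hb : 0 < b := ENNReal.toReal_pos hV0 (measure_ne_top _ _)
  set s := min ε₁ ε₂ / (a + b)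
  have hs : 0 < s := by positivity
  have hsab : s * a + s * b = min ε₁ ε₂ := by
    rw [← mul_add]; exact div_mul_cancel₀ _ (by positivity)
  have key := hVI _ (add_single_indicator_sub_single_indicator_mem_lambdaQ hmem hpq hU hV
    (mul_pos hs hb).le (mul_pos hs ha).le (by ring)
    (fun t ht => by linarith [(hUsub ht).1, mul_pos hs ha, min_le_left ε₁ ε₂])
    (fun t ht => by linarith [(hVsub ht).1, mul_pos hs hb, min_le_right ε₁ ε₂]))
  have hdir : (fun w t => (hstar + Pi.single q (V.indicator fun _ => s * a) -
        Pi.single p (U.indicator fun _ => s * b) : P → ℝ → ℝ) w t - hstar w t) =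
      Pi.single q (V.indicator fun _ => s * a) - Pi.single p (U.indicator fun _ => s * b) := by
    funext w t
    simp only [Pi.add_apply, Pi.sub_apply]
    ring
  rw [hdir, inner2_single_sub_single g
      (((integrable_const _).indicator hU).mul_of_top_right (hg p))
      (((integrable_const _).indicator hV).mul_of_top_right (hg q)),
    integral_mul_indicator_const _ hV, integral_mul_indicator_const _ hU] at key
  have hUint : (c + ε₁) * a ≤ ∫ t in U, g p t ∂μ :=
    setIntegral_ge_of_const_le_real hU (measure_ne_top _ _) (fun t ht => (hUsub ht).2)
      ((hg p).integrable le_top).integrableOn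
  have hVint : (-c + ε₂) * b ≤ -∫ t in V, g q t ∂μ := by
    rw [← integral_neg]
    exact setIntegral_ge_of_const_le_real hV (measure_ne_top _ _) (fun t ht => (hVsub ht).2)
      ((hg q).integrable le_top).neg.integrableOn
  have hpos : 0 < s * a * b * (ε₁ + ε₂) := by positivity
  nlinarith [mul_le_mul_of_nonneg_left hUint (mul_pos hs hb).le,
    mul_le_mul_of_nonneg_left hVint (mul_pos hs ha).le]

lemma exists_threshold_of_inner2_nonneg {g : P → ℝ → ℝ}
    (hg : ∀ p, MemLp (g p) ⊤ (horizonMeasure t0 tf)) {C : ℝ}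
    (hC : ∀ p, ∀ᵐ t ∂(horizonMeasure t0 tf), |g p t| ≤ C) {hstar : P → ℝ → ℝ}
    (hmem : hstar ∈ LambdaQ t0 tf comm B Q)
    (hVI : ∀ h ∈ LambdaQ t0 tf comm B Q, 0 ≤ inner2 t0 tf g (fun p t => h p t - hstar p t))
    (i : I) :
    ∃ ν : ℝ, ∀ p, comm p = i → ∀ᵐ t ∂(horizonMeasure t0 tf),
      (0 < hstar p t → g p t ≤ ν) ∧ (hstar p t < B p → ν ≤ g p t) := by
  obtain ⟨ν, hgt, hlt⟩ := exists_threshold_of_monotone_of_antitone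
    (A := fun c => ∀ p, comm p = i → ∀ᵐ t ∂(horizonMeasure t0 tf), 0 < hstar p t → g p t ≤ c)
    (B := fun c => ∀ q, comm q = i → ∀ᵐ t ∂(horizonMeasure t0 tf), hstar q t < B q → c ≤ g q t)
    (fun c c' hcc' hA p hp => (hA p hp).mono fun t ht h0 => (ht h0).trans hcc')
    (fun c c' hcc' hB q hq => (hB q hq).mono fun t ht h0 => hcc'.trans (ht h0))
    (fun c => by
      by_contra h
      simp only [not_or, not_forall] at h
      obtain ⟨⟨p, hp, hpc⟩, q, hq, hqc⟩ := h
      exact (ae_imp_le_or_ae_imp_ge_of_inner2_nonneg hg hmem hVI (hp.trans hq.symm) c).elim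
        hpc hqc)
    (fun p _ => (hC p).mono fun t ht _ => (abs_le.1 ht).2)
    (fun q _ => (hC q).mono fun t ht _ => (abs_le.1 ht).1)
  refine ⟨ν, fun p hp => ?_⟩
  filter_upwards [ae_imp_le_of_forall_lt fun c hc => hgt c hc p hp,
    ae_imp_ge_of_forall_gt fun c hc => hlt c hc p hp] with t hle hge
  exact ⟨hle, hge⟩

end Equilibrium

theorem stmt2_general {I P : Type*} [Fintype P] [DecidableEq I]
    (t0 tf : ℝ)
    (comm : P → I)
    (B : P → ℝ)
    (Q : I → ℝ)
    (Psi : (P → ℝ → ℝ) → P → ℝ → ℝ)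
    (hmeas : ∀ h p, Measurable (Psi h p))
    (hbd : ∀ h ∈ LambdaQ t0 tf comm B Q, ∀ p, ∃ M, ∀ t ∈ Icc t0 tf, |Psi h p t| ≤ M)
    (hstar : P → ℝ → ℝ) (hmem : hstar ∈ LambdaQ t0 tf comm B Q) :
    IsDEFixedVolume t0 tf comm B Q Psi hstar ↔
      ∀ h ∈ LambdaQ t0 tf comm B Q,
        0 ≤ inner2 t0 tf (Psi hstar) (fun p t => h p t - hstar p t) := by
  obtain ⟨C, hC⟩ : ∃ C, ∀ p, ∀ᵐ t ∂(horizonMeasure t0 tf), |Psi hstar p t| ≤ C := by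
    choose M hM using hbd hstar hmem
    obtain ⟨C, hC⟩ := (Set.finite_range M).bddAbove
    exact ⟨C, fun p => (ae_mem_Icc_horizonMeasure t0 tf).mono fun t ht =>
      (hM p t ht).trans (hC ⟨p, rfl⟩)⟩
  have hΨ : ∀ p, MemLp (Psi hstar p) ⊤ (horizonMeasure t0 tf) := fun p =>
    memLp_top_of_bound (hmeas hstar p).aestronglyMeasurable C (hC p)
  exact ⟨fun hde h hh => hde.inner2_sub_nonneg hΨ hh,
    fun hVI => ⟨hmem, exists_threshold_of_inner2_nonneg hΨ hC hmem hVI⟩⟩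

theorem stmt2 {I P : Type*} [Fintype I] [Fintype P] [DecidableEq I]
    (t0 tf : ℝ) (ht0 : 0 ≤ t0) (htf : t0 < tf)
    (comm : P → I) (hcomm : ∀ i, ∃ p, comm p = i)
    (B : P → ℝ) (hB : ∀ p, 0 ≤ B p)
    (Q : I → ℝ) (hQ : ∀ i, 0 ≤ Q i)
    (Psi : (P → ℝ → ℝ) → P → ℝ → ℝ)
    (hmeas : ∀ h p, Measurable (Psi h p))
    (hbd : ∀ h ∈ LambdaQ t0 tf comm B Q, ∀ p, ∃ M, ∀ t ∈ Icc t0 tf, |Psi h p t| ≤ M)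
    (hstar : P → ℝ → ℝ) (hmem : hstar ∈ LambdaQ t0 tf comm B Q) :
    IsDEFixedVolume t0 tf comm B Q Psi hstar ↔
      ∀ h ∈ LambdaQ t0 tf comm B Q,
        0 ≤ inner2 t0 tf (Psi hstar) (fun p t => h p t - hstar p t) :=
  stmt2_general t0 tf comm B Q Psi hmeas hbd hstar hmem

end
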